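/- arXiv:1912.06308 — 2 statements merged into one kernel-verified Lean document; each statement's English description precedes it below -/
import Mathlib

section
/- Let K be an infinite field, let n ≥ 1, d ≥ 1, and fix a d^{n}-cage over K. If P ∈ K[x_0,…,x_n] is homogeneous of degree e with 0 ≤ e < d, and P(p_I) = 0 for every I ∈ {1,…,d}^n with ∑_{j=1}^n (I_j − 1) ≤ d − 1 (the simplicial set of nodes), then P is the zero polynomial. Consequently, any nonzero homogeneous polynomial of degree at most d that vanishes on a supra-simplicial set of nodes of a d^{n}-cage has degree exactly d. -/
/-!
Induction on the degree `e` and the number of colours, for cages with `e + 1` hyperplanes of each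
colour. On the first hyperplane `H = {L₀ = 0}` of colour `0` the remaining colours cut out a cage
with one colour fewer, whose simplicial nodes are simplicial nodes of the original cage; so `P`
vanishes on `H` and `P = L₀ * Q`. Dropping `L₀` from colour `0` leaves a cage with `e`
hyperplanes of each colour, and `Q` vanishes at its simplicial nodes, where `L₀` does not vanish;
hence `Q = 0`.
-/

open MvPolynomial

namespace Module.Dual

variable {K : Type*} [Field K]

theorem exists_linearEquiv_apply_eq {σ : Type*} [Fintype σ] [DecidableEq σ]
    {f : Module.Dual K (σ → K)} (hf : f ≠ 0) :
    ∃ (B : (σ → K) ≃ₗ[K] (σ → K)) (k : σ), ∀ v, B v k = f v := by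
  obtain ⟨k, hk⟩ : ∃ k, f (Pi.single k 1) ≠ 0 := by
    by_contra! h
    exact hf (LinearMap.pi_ext' fun i => LinearMap.ext_ring (h i))
  let B : (σ → K) →ₗ[K] (σ → K) := LinearMap.pi (Function.update LinearMap.proj k f)
  have hB : ∀ v, B v k = f v := by simp [B]
  have hBinj : Function.Injective B := by
    rw [← LinearMap.ker_eq_bot, LinearMap.ker_eq_bot']
    intro v hv
    have hv_single : v = Pi.single k (v k) := by
      ext i
      rcases eq_or_ne i k with rfl | hi
      · simp
      · simpa [B, hi, Function.update_of_ne hi] using congr_fun hv i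
    have hvk : v k * f (Pi.single k 1) = 0 := by
      rw [← smul_eq_mul, ← map_smul, ← Pi.single_smul', smul_eq_mul, mul_one, ← hv_single,
        ← hB, hv, Pi.zero_apply]
    rw [hv_single, (mul_eq_zero.mp hvk).resolve_right hk, Pi.single_zero]
  exact ⟨LinearEquiv.ofInjectiveEndo B hBinj, k, hB⟩

theorem exists_injective_range_eq_ker {V : Type*} [AddCommGroup V] [Module K V]
    [FiniteDimensional K V] {m : ℕ} (hV : Module.finrank K V = m + 1) {f : Module.Dual K V}
    (hf : f ≠ 0) :
    ∃ φ : (Fin m → K) →ₗ[K] V,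
      Function.Injective φ ∧ LinearMap.range φ = LinearMap.ker f := by
  have hker : Module.finrank K (LinearMap.ker f) = Module.finrank K (Fin m → K) := by
    have := f.finrank_ker_add_one_of_ne_zero hf
    rw [Module.finrank_fin_fun]
    omega
  let e := LinearEquiv.ofFinrankEq _ _ hker
  refine ⟨(LinearMap.ker f).subtype ∘ₗ e.symm.toLinearMap,
    Subtype.val_injective.comp e.symm.injective, ?_⟩
  rw [LinearMap.range_comp, LinearEquiv.range, Submodule.map_top, Submodule.range_subtype]

end Module.Dual

namespace MvPolynomial

section CommSemiring

variable {R σ : Type*} [CommSemiring R]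

theorem IsHomogeneous.eval_smul {P : MvPolynomial σ R} {e : ℕ} (hP : P.IsHomogeneous e)
    (c : R) (v : σ → R) : eval (c • v) P = c ^ e * eval v P := by
  rw [eval_eq, eval_eq, Finset.mul_sum]
  refine Finset.sum_congr rfl fun m hm => ?_
  have hm : ∑ i ∈ m.support, m i = e := by
    simpa [Finsupp.weight_apply, Finsupp.sum] using hP (mem_support_iff.mp hm)
  simp only [Pi.smul_apply, smul_eq_mul, mul_pow, Finset.prod_mul_distrib,
    Finset.prod_pow_eq_pow_sum, hm]
  ring

theorem IsHomogeneous.eval_add {L : MvPolynomial σ R} (hL : L.IsHomogeneous 1) (v w : σ → R) :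
    eval (v + w) L = eval v L + eval w L := by
  have hmem : L ∈ homogeneousSubmodule σ R 1 := hL
  rw [homogeneousSubmodule_one_eq_span_X] at hmem
  clear hL
  induction hmem using Submodule.span_induction with
  | mem x hx => obtain ⟨i, rfl⟩ := hx; simp
  | zero => simp
  | add x y _ _ hx hy => simp only [map_add, hx, hy]; ring
  | smul a x _ hx => simp only [smul_eval, hx]; ring

theorem IsHomogeneous.exists_isHomogeneous_of_dvd {L P : MvPolynomial σ R} {i e : ℕ}
    (hL : L.IsHomogeneous i) (hP : P.IsHomogeneous (i + e)) (h : L ∣ P) :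
    ∃ Q : MvPolynomial σ R, Q.IsHomogeneous e ∧ P = L * Q := by
  let _ := MvPolynomial.gradedAlgebra (σ := σ) (R := R)
  obtain ⟨Q, rfl⟩ := h
  refine ⟨homogeneousComponent e Q, homogeneousComponent_isHomogeneous e Q, ?_⟩
  have := DirectSum.coe_decompose_mul_of_left_mem_of_le (𝒜 := homogeneousSubmodule σ R)
    (b := Q) hL (Nat.le_add_right i e)
  rw [← DirectSum.Decomposition.decompose'_eq, decomposition.decompose'_apply,
    decomposition.decompose'_apply, Nat.add_sub_cancel_left, homogeneousComponent_eq_self hP]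
    at this
  exact this

end CommSemiring

theorem X_dvd_sub_bind₁_update {R σ : Type*} [CommRing R] [DecidableEq σ] (k : σ)
    (P : MvPolynomial σ R) : X k ∣ P - bind₁ (Function.update X k 0) P := by
  induction P using MvPolynomial.induction_on with
  | C a => simp
  | add p q hp hq => simpa only [map_add, add_sub_add_comm] using dvd_add hp hq
  | mul_X p i hp =>
    rw [map_mul, bind₁_X_right]
    rcases eq_or_ne i k with rfl | hi
    · simp
    · rw [Function.update_of_ne hi, ← sub_mul]
      exact hp.mul_right _

theorem X_dvd_of_forall_eval_eq_zero {R σ : Type*} [CommRing R] [IsDomain R] [Infinite R]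
    [DecidableEq σ] (k : σ) {P : MvPolynomial σ R} (h : ∀ v, v k = 0 → eval v P = 0) :
    X k ∣ P := by
  have h0 : bind₁ (Function.update X k 0) P = 0 := MvPolynomial.funext fun v => by
    rw [← aeval_eq_eval, aeval_bind₁, map_zero]
    exact h _ (by simp)
  simpa only [h0, sub_zero] using X_dvd_sub_bind₁_update k P

section Field

variable {K σ τ : Type*} [Field K]

noncomputable def IsHomogeneous.toDual {L : MvPolynomial σ K} (hL : L.IsHomogeneous 1) :
    Module.Dual K (σ → K) where
  toFun v := eval v L
  map_add' := hL.eval_add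
  map_smul' c v := by simpa using hL.eval_smul c v

@[simp]
theorem IsHomogeneous.toDual_apply {L : MvPolynomial σ K} (hL : L.IsHomogeneous 1) (v : σ → K) :
    hL.toDual v = eval v L :=
  rfl

theorem IsHomogeneous.toDual_ne_zero [Infinite K] {L : MvPolynomial σ K}
    (hL : L.IsHomogeneous 1) (hL0 : L ≠ 0) : hL.toDual ≠ 0 :=
  fun h => hL0 <| MvPolynomial.funext fun v => by simpa using LinearMap.congr_fun h v

variable [Fintype σ] [DecidableEq σ]

noncomputable def linearSubst (A : (σ → K) →ₗ[K] (τ → K)) :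
    MvPolynomial τ K →ₐ[K] MvPolynomial σ K :=
  aeval fun k => ∑ i, C (LinearMap.toMatrix' A k i) * X i

@[simp]
theorem eval_linearSubst (A : (σ → K) →ₗ[K] (τ → K)) (w : σ → K)
    (Q : MvPolynomial τ K) : eval w (linearSubst A Q) = eval (A w) Q := by
  rw [linearSubst, aeval_eq_bind₁, ← aeval_eq_eval, aeval_bind₁,
    ← LinearMap.toMatrix'_mulVec]
  exact congrArg (eval · Q) (_root_.funext fun k => by simp [Matrix.mulVec, dotProduct])

theorem IsHomogeneous.linearSubst {Q : MvPolynomial τ K} {e : ℕ} (hQ : Q.IsHomogeneous e)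
    (A : (σ → K) →ₗ[K] (τ → K)) : (MvPolynomial.linearSubst A Q).IsHomogeneous e := by
  have h := hQ.aeval _ fun k => IsHomogeneous.sum Finset.univ _ 1 fun i _ =>
    isHomogeneous_C_mul_X (LinearMap.toMatrix' A k i) i
  rwa [one_mul] at h

theorem IsHomogeneous.dvd_of_forall_eval_eq_zero [Infinite K]
    {L P : MvPolynomial σ K} (hL : L.IsHomogeneous 1) (hL0 : L ≠ 0)
    (h : ∀ v, eval v L = 0 → eval v P = 0) : L ∣ P := by
  -- in the coordinates `B v`, the form `L` is the coordinate function `X k`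
  obtain ⟨B, k, hB⟩ := Module.Dual.exists_linearEquiv_apply_eq (hL.toDual_ne_zero hL0)
  have hX : X k ∣ MvPolynomial.linearSubst B.symm.toLinearMap P :=
    X_dvd_of_forall_eval_eq_zero k fun w hw => by
      rw [eval_linearSubst]
      apply h
      simpa [← hL.toDual_apply, ← hB] using hw
  have hP : MvPolynomial.linearSubst B.toLinearMap
      (MvPolynomial.linearSubst B.symm.toLinearMap P) = P :=
    MvPolynomial.funext fun v => by simp
  have hXL : MvPolynomial.linearSubst B.toLinearMap (X k) = L :=
    MvPolynomial.funext fun v => by simp [hB]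
  rw [← hP, ← hXL]
  exact map_dvd _ hX

theorem IsHomogeneous.exists_injective_mem_range_iff_eval_eq_zero [Infinite K] {m : ℕ}
    {L : MvPolynomial (Fin (m + 1)) K} (hL : L.IsHomogeneous 1) (hL0 : L ≠ 0) :
    ∃ φ : (Fin m → K) →ₗ[K] (Fin (m + 1) → K),
      Function.Injective φ ∧ ∀ v, v ∈ LinearMap.range φ ↔ eval v L = 0 := by
  obtain ⟨φ, hφ, hrange⟩ :=
    Module.Dual.exists_injective_range_eq_ker (m := m) (by simp) (hL.toDual_ne_zero hL0)
  exact ⟨φ, hφ, fun v => by simp [hrange]⟩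

end Field

end MvPolynomial

structure IsCage {K σ κ ι : Type*} [Field K] (L : κ → ι → MvPolynomial σ K)
    (p : (κ → ι) → σ → K) : Prop where
  isHomogeneous : ∀ j i, (L j i).IsHomogeneous 1
  eval_eq_zero_iff : ∀ I v, (∀ j, eval v (L j (I j)) = 0) ↔ ∃ c : K, v = c • p I
  eval_ne_zero : ∀ j i I, i ≠ I j → eval (p I) (L j i) ≠ 0

def shiftFirstColor (m e : ℕ) : Fin (m + 1) → Fin e → Fin (e + 1) :=
  Fin.cons Fin.succ fun _ => Fin.castSucc

theorem shiftFirstColor_injective (m e : ℕ) (j : Fin (m + 1)) :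
    Function.Injective (shiftFirstColor m e j) :=
  Fin.cases (Fin.succ_injective _) (fun _ => Fin.castSucc_injective _) j

theorem sum_shiftFirstColor {m e : ℕ} (I : Fin (m + 1) → Fin e) :
    ∑ j, (shiftFirstColor m e j (I j) : ℕ) = ∑ j, (I j : ℕ) + 1 := by
  simp only [Fin.sum_univ_succ, shiftFirstColor, Fin.cons_zero, Fin.cons_succ, Fin.val_succ,
    Fin.val_castSucc]
  ring

namespace IsCage

variable {K σ κ ι : Type*} [Field K]

theorem eval_node {L : κ → ι → MvPolynomial σ K} {p : (κ → ι) → σ → K} (hc : IsCage L p)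
    (I : κ → ι) (j : κ) : eval (p I) (L j (I j)) = 0 :=
  (hc.eval_eq_zero_iff I (p I)).mpr ⟨1, (one_smul K _).symm⟩ j

theorem comp {L : κ → ι → MvPolynomial σ K} {p : (κ → ι) → σ → K} (hc : IsCage L p)
    {ι' : Type*} (E : κ → ι' → ι) (hE : ∀ j, Function.Injective (E j)) :
    IsCage (fun j i => L j (E j i)) (fun I => p fun j => E j (I j)) where
  isHomogeneous j i := hc.isHomogeneous j (E j i)
  eval_eq_zero_iff _ := hc.eval_eq_zero_iff _
  eval_ne_zero j _ _ hi := hc.eval_ne_zero j _ _ ((hE j).ne hi)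

theorem restrict {τ : Type*} [Fintype τ] [DecidableEq τ] {m : ℕ}
    {L : Fin (m + 1) → ι → MvPolynomial σ K} {p : (Fin (m + 1) → ι) → σ → K} (hc : IsCage L p)
    (i₀ : ι) (φ : (τ → K) →ₗ[K] (σ → K)) (hφ : Function.Injective φ)
    (hrange : ∀ v, v ∈ LinearMap.range φ ↔ eval v (L 0 i₀) = 0) :
    ∃ p' : (Fin m → ι) → τ → K, (∀ I, φ (p' I) = p (Fin.cons i₀ I)) ∧
      IsCage (fun j i => linearSubst φ (L j.succ i)) p' := by
  choose p' hp' using fun I : Fin m → ι =>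
    (hrange (p (Fin.cons i₀ I))).mpr (by simpa using hc.eval_node (Fin.cons i₀ I) 0)
  refine ⟨p', hp', ⟨fun j i => (hc.isHomogeneous _ _).linearSubst φ, fun I w => ?_,
    fun j i I hi => ?_⟩⟩
  · simp only [eval_linearSubst]
    calc (∀ j, eval (φ w) (L j.succ (I j)) = 0)
        ↔ ∀ j, eval (φ w) (L j ((Fin.cons i₀ I : Fin (m + 1) → ι) j)) = 0 := by
          simp only [Fin.forall_fin_succ, Fin.cons_zero, Fin.cons_succ,
            (hrange _).mp (LinearMap.mem_range_self φ w), true_and]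
      _ ↔ ∃ c : K, φ w = c • p (Fin.cons i₀ I) := hc.eval_eq_zero_iff _ _
      _ ↔ ∃ c : K, w = c • p' I := by simp only [← hp', ← map_smul, hφ.eq_iff]
  · rw [eval_linearSubst, hp']
    exact hc.eval_ne_zero j.succ i _ (by simpa using hi)

theorem eq_zero_of_isHomogeneous_of_eval_eq_zero [Infinite K] {n e : ℕ}
    {L : Fin n → Fin (e + 1) → MvPolynomial (Fin (n + 1)) K}
    {p : (Fin n → Fin (e + 1)) → Fin (n + 1) → K} (hc : IsCage L p)
    {P : MvPolynomial (Fin (n + 1)) K} (hP : P.IsHomogeneous e)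
    (hvan : ∀ I, ∑ j, (I j : ℕ) ≤ e → eval (p I) P = 0) : P = 0 := by
  induction e generalizing n with
  | zero =>
    have hC : P = C (coeff 0 P) := by
      rw [← homogeneousComponent_zero, homogeneousComponent_eq_self hP]
    have h0 := hvan 0 (by simp)
    rw [hC, eval_C] at h0
    rw [hC, h0, map_zero]
  | succ e ihe =>
    induction n with
    | zero =>
      refine hP.eq_zero_of_forall_eval_eq_zero fun v => ?_
      obtain ⟨c, rfl⟩ := (hc.eval_eq_zero_iff isEmptyElim v).mp isEmptyElim
      rw [hP.eval_smul, hvan _ (by simp), mul_zero]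
    | succ m ihn =>
      have hL₀ : L 0 0 ≠ 0 := fun h =>
        hc.eval_ne_zero 0 0 (fun _ => 1) (by simp) (by simp [h])
      obtain ⟨φ, hφ, hrange⟩ :=
        (hc.isHomogeneous 0 0).exists_injective_mem_range_iff_eval_eq_zero hL₀
      obtain ⟨p', hp', hc'⟩ := hc.restrict 0 φ hφ hrange
      have hres : linearSubst φ P = 0 := ihn hc' (hP.linearSubst φ) fun I hI => by
        rw [eval_linearSubst, hp']
        exact hvan _ (by simpa [Fin.sum_univ_succ] using hI)
      have hdvd : L 0 0 ∣ P :=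
        (hc.isHomogeneous 0 0).dvd_of_forall_eval_eq_zero hL₀ fun v hv => by
        obtain ⟨w, rfl⟩ := (hrange v).mpr hv
        rw [← eval_linearSubst, hres, map_zero]
      obtain ⟨Q, hQ, rfl⟩ :=
        (hc.isHomogeneous 0 0).exists_isHomogeneous_of_dvd (Nat.add_comm e 1 ▸ hP) hdvd
      rw [ihe (hc.comp _ (shiftFirstColor_injective m (e + 1))) hQ ?_, mul_zero]
      intro I hI
      have h := hvan _ ((sum_shiftFirstColor I).trans_le (by omega))
      rw [eval_mul] at h
      have hL₀I : eval (p fun j => shiftFirstColor m (e + 1) j (I j)) (L 0 0) ≠ 0 :=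
        hc.eval_ne_zero 0 0 _ (by simpa [shiftFirstColor] using (Fin.succ_ne_zero (I 0)).symm)
      exact (mul_eq_zero.mp h).resolve_left hL₀I

end IsCage

theorem low_degree_vanish_on_simplicial_implies_zero_general
    {K : Type*} [Field K] [Infinite K] (n d : ℕ)
    (L : Fin n → Fin d → MvPolynomial (Fin (n + 1)) K)
    (hL : ∀ j i, (L j i).IsHomogeneous 1)
    (p : (Fin n → Fin d) → Fin (n + 1) → K)
    (hline : ∀ (I : Fin n → Fin d) (v : Fin (n + 1) → K),
      (∀ j, MvPolynomial.eval v (L j (I j)) = 0) ↔ ∃ c : K, v = c • p I)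
    (hne : ∀ (j : Fin n) (i : Fin d) (I : Fin n → Fin d),
      i ≠ I j → MvPolynomial.eval (p I) (L j i) ≠ 0) :
    (∀ (P : MvPolynomial (Fin (n + 1)) K) (e : ℕ), e < d → P.IsHomogeneous e →
        (∀ I : Fin n → Fin d, (∑ j, (I j : ℕ)) ≤ d - 1 →
          MvPolynomial.eval (p I) P = 0) →
        P = 0) ∧
    (∀ (P : MvPolynomial (Fin (n + 1)) K) (e : ℕ), e ≤ d → P.IsHomogeneous e →
        P ≠ 0 →
        (∀ I : Fin n → Fin d, (∑ j, (I j : ℕ)) ≤ d →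
          MvPolynomial.eval (p I) P = 0) →
        e = d) := by
  have hc : IsCage L p := ⟨hL, hline, hne⟩
  have low_degree : ∀ (P : MvPolynomial (Fin (n + 1)) K) (e : ℕ), e < d →
      P.IsHomogeneous e →
      (∀ I : Fin n → Fin d, (∑ j, (I j : ℕ)) ≤ d - 1 → eval (p I) P = 0) → P = 0 :=
    fun P e hed hP hvan =>
      (hc.comp (fun _ => Fin.castLE hed) fun _ => Fin.castLE_injective hed)
        |>.eq_zero_of_isHomogeneous_of_eval_eq_zero hP fun I hI =>
          hvan _ (by simp only [Fin.val_castLE]; omega)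
  refine ⟨low_degree, fun P e hed hP hP0 hvan => ?_⟩
  by_contra hne'
  exact hP0 (low_degree P e (lt_of_le_of_ne hed hne') hP fun I hI => hvan I (by omega))

/-- A homogeneous polynomial of degree `e < d` vanishing on a simplicial set of
nodes of a `d^{n}`-cage is zero; consequently any nonzero homogeneous polynomial
of degree at most `d` vanishing on a supra-simplicial set has degree exactly `d`. -/
theorem low_degree_vanish_on_simplicial_implies_zero
    {K : Type*} [Field K] [Infinite K] (n d : ℕ) (hn : 1 ≤ n) (hd : 1 ≤ d)
    (L : Fin n → Fin d → MvPolynomial (Fin (n + 1)) K)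
    (hL : ∀ j i, (L j i).IsHomogeneous 1)
    (p : (Fin n → Fin d) → Fin (n + 1) → K)
    (hp0 : ∀ I, p I ≠ 0)
    (hind : ∀ I : Fin n → Fin d, LinearIndependent K fun j => L j (I j))
    (hline : ∀ (I : Fin n → Fin d) (v : Fin (n + 1) → K),
      (∀ j, MvPolynomial.eval v (L j (I j)) = 0) ↔ ∃ c : K, v = c • p I)
    (hne : ∀ (j : Fin n) (i : Fin d) (I : Fin n → Fin d),
      i ≠ I j → MvPolynomial.eval (p I) (L j i) ≠ 0) :
    (∀ (P : MvPolynomial (Fin (n + 1)) K) (e : ℕ), e < d → P.IsHomogeneous e →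
        (∀ I : Fin n → Fin d, (∑ j, (I j : ℕ)) ≤ d - 1 →
          MvPolynomial.eval (p I) P = 0) →
        P = 0) ∧
    (∀ (P : MvPolynomial (Fin (n + 1)) K) (e : ℕ), e ≤ d → P.IsHomogeneous e →
        P ≠ 0 →
        (∀ I : Fin n → Fin d, (∑ j, (I j : ℕ)) ≤ d →
          MvPolynomial.eval (p I) P = 0) →
        e = d) :=
  low_degree_vanish_on_simplicial_implies_zero_general n d L hL p hline hne
end

section
/- Let K be a field, let n ≥ 1, d ≥ 1, and fix a d^{n}-cage over K. For every nonzero vector λ = (λ_1,…,λ_n) ∈ K^n, the polynomial P_λ := ∑_{j=1}^n λ_j·𝓛_j satisfies ∇P_λ(p_I) ≠ 0 for every node p_I of the cage. (Every degree-d hypersurface through all the nodes of the cage is smooth at each node.) -/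
/-!
At a node `p_I` only the factor `L_{j,I_j}` of `𝓛_j` vanishes, so by the Leibniz rule
`∇P_λ(p_I) = ∑_j λ_j M_j ∇L_{j,I_j}` with `M_j = ∏_{i ≠ I_j} L_{j,i}(p_I) ≠ 0`. A linear form is
determined by its (constant) gradient, so a vanishing gradient forces `∑_j λ_j M_j L_{j,I_j} = 0`,
and the linear independence of the forms through `p_I` gives `λ_j M_j = 0`, hence `λ = 0`.
-/

open MvPolynomial

namespace MvPolynomial

variable {R σ : Type*} [CommSemiring R]

theorem IsHomogeneous.eq_zero_of_forall_eval_pderiv_eq_zero [Fintype σ] {Q : MvPolynomial σ R}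
    (hQ : Q.IsHomogeneous 1) {v : σ → R} (hv : ∀ l, eval v (pderiv l Q) = 0) : Q = 0 := by
  have hpderiv : ∀ l, pderiv l Q = 0 := fun l => by
    have hc := totalDegree_eq_zero_iff_eq_C.mp
      (Nat.le_zero.mp (hQ.pderiv (i := l)).totalDegree_le)
    have := hv l
    rw [hc, eval_C] at this
    rw [hc, this, map_zero]
  simpa [hpderiv] using hQ.sum_X_mul_pderiv.symm

theorem eval_pderiv_prod_of_eval_eq_zero {ι : Type*} [DecidableEq ι] {s : Finset ι}
    (f : ι → MvPolynomial σ R) {i₀ : ι} (hi₀ : i₀ ∈ s) {v : σ → R} (hv : eval v (f i₀) = 0)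
    (l : σ) :
    eval v (pderiv l (∏ i ∈ s, f i)) =
      (∏ i ∈ s.erase i₀, eval v (f i)) * eval v (pderiv l (f i₀)) := by
  rw [← Finset.mul_prod_erase s f hi₀, Derivation.leibniz]
  simp [hv, map_prod]

theorem eq_zero_of_linearIndependent_of_eval_pderiv_sum_eq_zero {R : Type*} [CommRing R]
    [Fintype σ] {ι : Type*} [Fintype ι] {L : ι → MvPolynomial σ R} (hL : ∀ j, (L j).IsHomogeneous 1)
    (hind : LinearIndependent R L) {a : ι → R} {v : σ → R}
    (h : ∀ l, ∑ j, a j * eval v (pderiv l (L j)) = 0) : a = 0 := by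
  have hhom : (∑ j, a j • L j).IsHomogeneous 1 :=
    IsHomogeneous.sum _ _ _ fun j _ => by simpa [smul_eq_C_mul] using (hL j).C_mul (a j)
  have hsum : ∑ j, a j • L j = 0 :=
    hhom.eq_zero_of_forall_eval_pderiv_eq_zero (v := v) fun l => by simpa using h l
  exact _root_.funext (Fintype.linearIndependent_iff.mp hind a hsum)

end MvPolynomial

theorem cage_hypersurface_smooth_at_nodes_general
    {K : Type*} [Field K] (n d : ℕ)
    (L : Fin n → Fin d → MvPolynomial (Fin (n + 1)) K)
    (hL : ∀ j i, (L j i).IsHomogeneous 1)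
    (p : (Fin n → Fin d) → Fin (n + 1) → K)
    (hind : ∀ I : Fin n → Fin d, LinearIndependent K fun j => L j (I j))
    (hline : ∀ (I : Fin n → Fin d) (v : Fin (n + 1) → K),
      (∀ j, MvPolynomial.eval v (L j (I j)) = 0) ↔ ∃ c : K, v = c • p I)
    (hne : ∀ (j : Fin n) (i : Fin d) (I : Fin n → Fin d),
      i ≠ I j → MvPolynomial.eval (p I) (L j i) ≠ 0)
    (lam : Fin n → K) (hlam : lam ≠ 0) :
    ∀ I : Fin n → Fin d,
      (fun l : Fin (n + 1) =>
        MvPolynomial.eval (p I)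
          (MvPolynomial.pderiv l (∑ j, MvPolynomial.C (lam j) * ∏ i, L j i)))
        ≠ 0 := by
  intro I hgrad
  have hnode : ∀ j, eval (p I) (L j (I j)) = 0 := (hline I (p I)).mpr ⟨1, (one_smul K _).symm⟩
  set M : Fin n → K := fun j => ∏ i ∈ Finset.univ.erase (I j), eval (p I) (L j i)
  have hM : ∀ j, M j ≠ 0 := fun j =>
    Finset.prod_ne_zero_iff.mpr fun i hi => hne j i I (Finset.ne_of_mem_erase hi)
  have hcomb : lam * M = 0 := by
    refine eq_zero_of_linearIndependent_of_eval_pderiv_sum_eq_zero (fun j => hL j (I j))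
      (hind I) (v := p I) fun l => ?_
    have := congrFun hgrad l
    simp only [map_sum, Derivation.leibniz, pderiv_C, smul_eq_mul, map_mul, eval_C,
      eval_pderiv_prod_of_eval_eq_zero _ (Finset.mem_univ _) (hnode _), mul_zero,
      add_zero, Pi.zero_apply] at this
    simpa [M, mul_assoc] using this
  exact hlam (funext fun j => (mul_eq_zero.mp (congrFun hcomb j)).resolve_right (hM j))

/-- Every degree-`d` hypersurface `{P_λ = 0}` through all the nodes of a
`d^{n}`-cage (with `λ ≠ 0`) has nonvanishing gradient at each node, i.e. it is
smooth at each node of the cage. -/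
theorem cage_hypersurface_smooth_at_nodes
    {K : Type*} [Field K] (n d : ℕ) (hn : 1 ≤ n) (hd : 1 ≤ d)
    (L : Fin n → Fin d → MvPolynomial (Fin (n + 1)) K)
    (hL : ∀ j i, (L j i).IsHomogeneous 1)
    (p : (Fin n → Fin d) → Fin (n + 1) → K)
    (hp0 : ∀ I, p I ≠ 0)
    (hind : ∀ I : Fin n → Fin d, LinearIndependent K fun j => L j (I j))
    (hline : ∀ (I : Fin n → Fin d) (v : Fin (n + 1) → K),
      (∀ j, MvPolynomial.eval v (L j (I j)) = 0) ↔ ∃ c : K, v = c • p I)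
    (hne : ∀ (j : Fin n) (i : Fin d) (I : Fin n → Fin d),
      i ≠ I j → MvPolynomial.eval (p I) (L j i) ≠ 0)
    (lam : Fin n → K) (hlam : lam ≠ 0) :
    ∀ I : Fin n → Fin d,
      (fun l : Fin (n + 1) =>
        MvPolynomial.eval (p I)
          (MvPolynomial.pderiv l (∑ j, MvPolynomial.C (lam j) * ∏ i, L j i)))
        ≠ 0 :=
  cage_hypersurface_smooth_at_nodes_general n d L hL p hind hline hne lam hlam
end
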